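/- arXiv:2305.10950 — 7 statements merged into one kernel-verified Lean document; each statement's English description precedes it below -/
import Mathlib

section
/- Let d ≥ 1 be an integer and let Γ₁ and Γ₂ be subgroups of the orthogonal group O(d+1) of (d+1)×(d+1) real matrices, each of order 2. If for every z ∈ ℂ with |z| < 1 one has Σ_{γ∈Γ₁} det(I_{d+1} − z·γ)⁻¹ = Σ_{γ∈Γ₂} det(I_{d+1} − z·γ)⁻¹ (viewing each γ as a complex matrix), then Γ₁ and Γ₂ are conjugate in O(d+1), i.e. there exists g ∈ O(d+1) with g·Γ₁·g⁻¹ = Γ₂. -/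
open Matrix

/-!
An order-two subgroup of `O(d+1)` is `{1, a}` for an orthogonal involution `a`, so its Ikeda sum
is `det(1 - z)⁻¹ + det(1 - z a)⁻¹`, and isospectrality says `det(1 - z a₁) = det(1 - z a₂)` on the
unit disc. These are values of the reversed characteristic polynomials, so `a₁` and `a₂` have the
same characteristic polynomial. An orthogonal involution is symmetric (`aᵀ = a⁻¹ = a`), so the
spectral theorem conjugates it inside `O(d+1)` to the diagonal matrix of its eigenvalues, which
the characteristic polynomial determines. Hence `a₁` and `a₂`, and the groups they generate, are
conjugate.
-/

/-- The summand `det(I − z·γ)⁻¹` in Ikeda's generating function, where the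
orthogonal matrix `γ` is viewed as a complex matrix. -/
noncomputable def ikedaTerm (d : ℕ) (z : ℂ)
    (γ : Matrix.orthogonalGroup (Fin (d + 1)) ℝ) : ℂ :=
  ((1 - z • ((γ : Matrix (Fin (d + 1)) (Fin (d + 1)) ℝ).map Complex.ofReal)).det)⁻¹

namespace Subgroup

variable {G : Type*} [Group G]

theorem exists_zpowers_eq_of_card_eq_two {Γ : Subgroup G} (h : Nat.card Γ = 2) :
    ∃ a : G, orderOf a = 2 ∧ zpowers a = Γ := by
  have : Fact (Nat.Prime 2) := ⟨Nat.prime_two⟩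
  obtain ⟨a, ha⟩ := Γ.isCyclic_iff_exists_zpowers_eq_top.mp (isCyclic_of_prime_card h)
  exact ⟨a, by rw [← Nat.card_zpowers, ha, h], ha⟩

theorem tsum_zpowers_of_orderOf_eq_two {M : Type*} [AddCommMonoid M] [TopologicalSpace M]
    {a : G} (ha : orderOf a = 2) (f : G → M) :
    ∑' x : zpowers a, f x = f 1 + f a := by
  have hfin : IsOfFinOrder a := orderOf_pos_iff.mp (by omega)
  rw [← (finEquivZPowers hfin).tsum_eq, tsum_fintype]
  simp only [finEquivZPowers_apply]
  rw [Fin.sum_univ_eq_sum_range (fun i => f (a ^ i)), ha, Finset.sum_range_succ,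
    Finset.sum_range_one, pow_zero, pow_one]

end Subgroup

namespace Matrix

variable {n : Type*} [Fintype n] [DecidableEq n]

section Charpoly

open Polynomial

variable {R : Type*} [CommRing R]

theorem eval_charpolyRev_eq_det (M : Matrix n n R) (z : R) :
    M.charpolyRev.eval z = det (1 - z • M) := by
  rw [charpolyRev, ← coe_evalRingHom, RingHom.map_det]
  congr 1
  ext i j
  simp [one_apply, apply_ite, mul_comm _ z]

theorem charpoly_eq_of_charpolyRev_eq [Nontrivial R] {M N : Matrix n n R}
    (h : M.charpolyRev = N.charpolyRev) : M.charpoly = N.charpoly := by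
  have := congrArg (reflect (Fintype.card n)) h
  rwa [← reverse_charpoly, ← reverse_charpoly, reverse, reverse, charpoly_natDegree_eq_dim,
    charpoly_natDegree_eq_dim, reflect_reflect, reflect_reflect] at this

theorem charpoly_eq_of_det_one_sub_smul_eq [IsDomain R] {M N : Matrix n n R} {s : Set R}
    (hs : s.Infinite) (h : ∀ z ∈ s, det (1 - z • M) = det (1 - z • N)) :
    M.charpoly = N.charpoly :=
  charpoly_eq_of_charpolyRev_eq <| eq_of_infinite_eval_eq _ _ <|
    hs.mono fun z hz => by simp only [Set.mem_ofPred_eq, eval_charpolyRev_eq_det, h z hz]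

end Charpoly

theorem isHermitian_of_mul_self_eq_one {R : Type*} [CommRing R] [StarRing R]
    {a : unitaryGroup n R} (ha : a * a = 1) : (a : Matrix n n R).IsHermitian := by
  rw [IsHermitian, ← star_eq_conjTranspose, ← Unitary.coe_star, Unitary.star_eq_inv,
    inv_eq_of_mul_eq_one_right ha]

variable {𝕜 : Type*} [RCLike 𝕜]

theorem IsHermitian.coe_inv_eigenvectorUnitary_mul_mul {a : unitaryGroup n 𝕜}
    (ha : (a : Matrix n n 𝕜).IsHermitian) :
    ((ha.eigenvectorUnitary⁻¹ * a * ha.eigenvectorUnitary : unitaryGroup n 𝕜) : Matrix n n 𝕜) =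
      diagonal (RCLike.ofReal ∘ ha.eigenvalues) := by
  rw [← ha.conjStarAlgAut_star_eigenvectorUnitary, Unitary.conjStarAlgAut_star_apply,
    ← Unitary.star_eq_inv]
  rfl

theorem isConj_of_isHermitian_of_charpoly_eq {a b : unitaryGroup n 𝕜}
    (ha : (a : Matrix n n 𝕜).IsHermitian) (hb : (b : Matrix n n 𝕜).IsHermitian)
    (h : (a : Matrix n n 𝕜).charpoly = (b : Matrix n n 𝕜).charpoly) : IsConj a b := by
  set u := ha.eigenvectorUnitary
  set v := hb.eigenvectorUnitary
  have hdiag : u⁻¹ * a * u = v⁻¹ * b * v := Subtype.ext <| by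
    rw [ha.coe_inv_eigenvectorUnitary_mul_mul, hb.coe_inv_eigenvectorUnitary_mul_mul,
      (ha.eigenvalues_eq_eigenvalues_iff hb).mpr h]
  exact isConj_iff.mpr ⟨v * u⁻¹, calc
    v * u⁻¹ * a * (v * u⁻¹)⁻¹ = v * (u⁻¹ * a * u) * v⁻¹ := by group
    _ = b := by rw [hdiag]; group⟩

end Matrix

theorem charpoly_eq_of_ikedaTerm_eq {d : ℕ} {a b : orthogonalGroup (Fin (d + 1)) ℝ}
    (h : ∀ z : ℂ, ‖z‖ < 1 → ikedaTerm d z a = ikedaTerm d z b) :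
    (a : Matrix (Fin (d + 1)) (Fin (d + 1)) ℝ).charpoly =
      (b : Matrix (Fin (d + 1)) (Fin (d + 1)) ℝ).charpoly := by
  apply Polynomial.map_injective Complex.ofRealHom Complex.ofReal_injective
  rw [← charpoly_map, ← charpoly_map]
  exact charpoly_eq_of_det_one_sub_smul_eq
    (infinite_of_mem_nhds 0 (Metric.ball_mem_nhds 0 one_pos))
    fun z hz => inv_injective (h z (mem_ball_zero_iff.mp hz))

theorem conj_of_isospectral_of_card_two_general
    (d : ℕ)
    (Γ₁ Γ₂ : Subgroup (Matrix.orthogonalGroup (Fin (d + 1)) ℝ))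
    (h₁ : Nat.card Γ₁ = 2) (h₂ : Nat.card Γ₂ = 2)
    (hiso : ∀ z : ℂ, ‖z‖ < 1 →
      ∑' γ : Γ₁, ikedaTerm d z (γ : Matrix.orthogonalGroup (Fin (d + 1)) ℝ)
        = ∑' γ : Γ₂, ikedaTerm d z (γ : Matrix.orthogonalGroup (Fin (d + 1)) ℝ)) :
    ∃ g : Matrix.orthogonalGroup (Fin (d + 1)) ℝ,
      ∀ x : Matrix.orthogonalGroup (Fin (d + 1)) ℝ,
        x ∈ Γ₂ ↔ ∃ γ ∈ Γ₁, x = g * γ * g⁻¹ := by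
  obtain ⟨a₁, ha₁, rfl⟩ := Subgroup.exists_zpowers_eq_of_card_eq_two h₁
  obtain ⟨a₂, ha₂, rfl⟩ := Subgroup.exists_zpowers_eq_of_card_eq_two h₂
  have hterm : ∀ z : ℂ, ‖z‖ < 1 → ikedaTerm d z a₁ = ikedaTerm d z a₂ := fun z hz => by
    have := hiso z hz
    rwa [Subgroup.tsum_zpowers_of_orderOf_eq_two ha₁,
      Subgroup.tsum_zpowers_of_orderOf_eq_two ha₂, add_right_inj] at this
  have hinv {a : orthogonalGroup (Fin (d + 1)) ℝ} (ha : orderOf a = 2) : a * a = 1 := by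
    rw [← pow_two, ← ha, pow_orderOf_eq_one]
  obtain ⟨g, rfl⟩ := isConj_iff.mp <| isConj_of_isHermitian_of_charpoly_eq
    (isHermitian_of_mul_self_eq_one (hinv ha₁)) (isHermitian_of_mul_self_eq_one (hinv ha₂))
    (charpoly_eq_of_ikedaTerm_eq hterm)
  refine ⟨g, fun x => ?_⟩
  rw [← MulAut.conj_apply, ← MulEquiv.coe_toMonoidHom, ← MonoidHom.map_zpowers, Subgroup.mem_map]
  simp [eq_comm]

/-- Two subgroups of `O(d+1)` of order `2` whose Ikeda generating sums agree on the
open unit disc are conjugate in `O(d+1)`. -/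
theorem conj_of_isospectral_of_card_two
    (d : ℕ) (hd : 1 ≤ d)
    (Γ₁ Γ₂ : Subgroup (Matrix.orthogonalGroup (Fin (d + 1)) ℝ))
    (h₁ : Nat.card Γ₁ = 2) (h₂ : Nat.card Γ₂ = 2)
    (hiso : ∀ z : ℂ, ‖z‖ < 1 →
      ∑' γ : Γ₁, ikedaTerm d z (γ : Matrix.orthogonalGroup (Fin (d + 1)) ℝ)
        = ∑' γ : Γ₂, ikedaTerm d z (γ : Matrix.orthogonalGroup (Fin (d + 1)) ℝ)) :
    ∃ g : Matrix.orthogonalGroup (Fin (d + 1)) ℝ,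
      ∀ x : Matrix.orthogonalGroup (Fin (d + 1)) ℝ,
        x ∈ Γ₂ ↔ ∃ γ ∈ Γ₁, x = g * γ * g⁻¹ :=
  conj_of_isospectral_of_card_two_general d Γ₁ Γ₂ h₁ h₂ hiso
end

section
/- Let m, n, r, d be positive integers with m > 1 satisfying: (I.1) gcd(n·(r−1), m) = 1; (I.2) r^n ≡ 1 (mod m) and 1 ≤ r ≤ m; (I.3) d is the least positive integer with r^d ≡ 1 (mod m); (I.4) d divides n and every prime dividing d divides n/d; and m·n < 24. Then (m, n, r, d) = (3, 4, 2, 2) or (m, n, r, d) = (5, 4, 4, 2). -/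
/-!
Coprimality of `r - 1` and `m` rules out `r ≡ 1 (mod m)`, so `d ≠ 1`, and it forces `m` odd,
since otherwise `r ^ d ≡ 1 (mod 2)` makes `r - 1` even. Condition (I.4) gives `p * d ∣ n` for
the least prime `p ∣ d`, so `n ≥ p²`; as `m ≥ 3` and `m * n < 24`, this leaves only `d = 2`,
`n = 4` and `m ∈ {3, 5}`. Both are prime, and `r ^ 2 ≡ 1`, `r ≢ 1 (mod m)` then give `r = m - 1`.
-/

lemma not_modEq_one_of_coprime_sub_one {m r : ℕ} (hm : m ≠ 1) (h : Nat.Coprime (r - 1) m) :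
    ¬ r ≡ 1 [MOD m] := by
  intro hr
  have hdvd : m ∣ r - 1 := by
    rcases Nat.eq_zero_or_pos r with rfl | hr0
    · simp
    · exact (Nat.modEq_iff_dvd' hr0).mp hr.symm
  exact hm (Nat.eq_one_of_dvd_coprimes h hdvd dvd_rfl)

lemma odd_of_pow_modEq_one_of_coprime_sub_one {m r d : ℕ} (hd : d ≠ 0)
    (hr : r ^ d ≡ 1 [MOD m]) (h : Nat.Coprime (r - 1) m) : Odd m := by
  by_contra hodd
  have h2m : 2 ∣ m := (Nat.not_odd_iff_even.mp hodd).two_dvd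
  have hr_odd : Odd r := by
    have : Odd (r ^ d) := Nat.odd_iff.mpr (hr.of_dvd h2m)
    exact (Nat.odd_pow_iff hd).mp this
  have h2r : 2 ∣ r - 1 := (Nat.Odd.sub_odd hr_odd odd_one).two_dvd
  exact absurd (Nat.eq_one_of_dvd_coprimes h h2r h2m) (by norm_num)

lemma minFac_mul_dvd_of_forall_prime_dvd_div {d n : ℕ} (hd : d ≠ 1) (hdn : d ∣ n)
    (h : ∀ p : ℕ, p.Prime → p ∣ d → p ∣ n / d) : d.minFac * d ∣ n := by
  obtain ⟨k, rfl⟩ := hdn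
  rcases eq_or_ne d 0 with rfl | hd0
  · simp
  have hk := h _ (Nat.minFac_prime hd) (Nat.minFac_dvd d)
  rw [Nat.mul_div_cancel_left k (Nat.pos_of_ne_zero hd0)] at hk
  rw [mul_comm d k]
  exact Nat.mul_dvd_mul_right hk d

lemma eq_two_and_eq_four_of_forall_prime_dvd_div {d n : ℕ} (hn : n ≠ 0) (hn8 : n < 8)
    (hd : d ≠ 1) (hdn : d ∣ n) (h : ∀ p : ℕ, p.Prime → p ∣ d → p ∣ n / d) :
    d = 2 ∧ n = 4 := by
  have hdvd := minFac_mul_dvd_of_forall_prime_dvd_div hd hdn h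
  have hp2 : 2 ≤ d.minFac := (Nat.minFac_prime hd).two_le
  have hpd : d.minFac ≤ d := Nat.minFac_le (Nat.pos_of_dvd_of_pos hdn (Nat.pos_of_ne_zero hn))
  have hlt : d.minFac * d < 8 := (Nat.le_of_dvd (Nat.pos_of_ne_zero hn) hdvd).trans_lt hn8
  have hp : d.minFac = 2 := by nlinarith
  have h2d : 2 ∣ d := hp ▸ Nat.minFac_dvd d
  rw [hp] at hdvd hlt hpd
  obtain rfl : d = 2 := by omega
  omega

lemma add_one_eq_of_sq_modEq_one {p r : ℕ} (hp : p.Prime) (hrp : r ≤ p)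
    (hsq : r ^ 2 ≡ 1 [MOD p]) (hr : ¬ r ≡ 1 [MOD p]) : r + 1 = p := by
  have := Fact.mk hp
  have hsq' : (r : ZMod p) * r = 1 := by
    rw [← sq, ← Nat.cast_pow, ← Nat.cast_one, ZMod.natCast_eq_natCast_iff]
    exact hsq
  have hneg : (r : ZMod p) = -1 := by
    refine (mul_self_eq_one_iff.mp hsq').resolve_left fun h1 => hr ?_
    rwa [← Nat.cast_one, ZMod.natCast_eq_natCast_iff] at h1
  have hdvd : p ∣ r + 1 := by
    rw [← ZMod.natCast_eq_zero_iff]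
    push_cast
    rw [hneg, neg_add_cancel]
  have := hp.two_le
  exact Nat.eq_of_dvd_of_lt_two_mul (by omega) hdvd (by omega)

theorem typeI_classification_lt24_general
    (m n r d : ℕ) (hm : 1 < m)
    -- (I.1)
    (hI1 : Nat.gcd (n * (r - 1)) m = 1)
    (hrm : r ≤ m)
    -- (I.3) : d is the least positive integer with r^d ≡ 1 (mod m)
    (hI3 : IsLeast {e : ℕ | 0 < e ∧ r ^ e ≡ 1 [MOD m]} d)
    -- (I.4)
    (hI4 : d ∣ n) (hI4' : ∀ p : ℕ, p.Prime → p ∣ d → p ∣ n / d)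
    (h24 : m * n < 24) :
    (m, n, r, d) = (3, 4, 2, 2) ∨ (m, n, r, d) = (5, 4, 4, 2) := by
  obtain ⟨⟨hd0, hrd⟩, -⟩ := hI3
  have hn0 : n ≠ 0 := by
    rintro rfl
    exact hm.ne' (by simpa using hI1)
  have hcop : Nat.Coprime (r - 1) m := Nat.Coprime.coprime_mul_left hI1
  have hr_ne : ¬ r ≡ 1 [MOD m] := not_modEq_one_of_coprime_sub_one hm.ne' hcop
  have hd1 : d ≠ 1 := by
    rintro rfl
    exact hr_ne (by simpa using hrd)
  obtain ⟨k, rfl⟩ := odd_of_pow_modEq_one_of_coprime_sub_one hd0.ne' hrd hcop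
  have hk1 : 1 ≤ k := by omega
  obtain ⟨rfl, rfl⟩ := eq_two_and_eq_four_of_forall_prime_dvd_div hn0 (by nlinarith) hd1 hI4 hI4'
  have hk : k = 1 ∨ k = 2 := by omega
  have hprime : (2 * k + 1).Prime := by rcases hk with rfl | rfl <;> norm_num
  obtain rfl : r = 2 * k := by
    have := add_one_eq_of_sq_modEq_one hprime hrm hrd hr_ne
    omega
  rcases hk with rfl | rfl <;> simp

/-- The only non-cyclic fixed point free groups of Type I of order less than 24:
Wolf's arithmetic conditions (I.1)–(I.4) with `m > 1` and `m·n < 24` force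
`(m, n, r, d) = (3, 4, 2, 2)` or `(m, n, r, d) = (5, 4, 4, 2)`. -/
theorem typeI_classification_lt24
    (m n r d : ℕ) (hm : 1 < m) (hn : 0 < n) (hr : 0 < r) (hd : 0 < d)
    -- (I.1)
    (hI1 : Nat.gcd (n * (r - 1)) m = 1)
    -- (I.2)
    (hI2 : r ^ n ≡ 1 [MOD m]) (hr1 : 1 ≤ r) (hrm : r ≤ m)
    -- (I.3) : d is the least positive integer with r^d ≡ 1 (mod m)
    (hI3 : IsLeast {e : ℕ | 0 < e ∧ r ^ e ≡ 1 [MOD m]} d)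
    -- (I.4)
    (hI4 : d ∣ n) (hI4' : ∀ p : ℕ, p.Prime → p ∣ d → p ∣ n / d)
    (h24 : m * n < 24) :
    (m, n, r, d) = (3, 4, 2, 2) ∨ (m, n, r, d) = (5, 4, 4, 2) :=
  typeI_classification_lt24_general m n r d hm hI1 hrm hI3 hI4 hI4' h24
end

section
/- Let d, m, n, r, s, t be positive integers satisfying: (I.1) gcd(n·(r−1), m) = 1; (I.2) r^n ≡ 1 (mod m) and 1 ≤ r ≤ m; (I.3) d is the least positive integer with r^d ≡ 1 (mod m); (I.4) d divides n and every prime dividing d divides n/d; (II.1) s² ≡ 1 (mod m) and 1 ≤ s ≤ m; (II.2) r^(t−1) ≡ 1 (mod m); (II.3) n = 2^u·n′′ for some integers u ≥ 2 and n′′ odd; (II.4) t ≡ −1 (mod 2^u), t² ≡ 1 (mod n), and 1 ≤ t ≤ n; and 2·m·n < 24. Then (d, m, n, r, s, t) = (1, 1, 4, 1, 1, 3) or (d, m, n, r, s, t) = (1, 1, 8, 1, 1, 7). -/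
/-!
Since `4 ∣ n`, the bound `2·m·n < 24` leaves `m < 3`, and (I.1) makes `m` prime to the even
number `n`, so `m = 1`; then `r = s = 1`, and `d = 1` because every power is `≡ 1 (mod 1)`.
The odd part of `n` is below `3`, so `n = 2^u` with `u ∈ {2, 3}`, and `2^u ∣ t + 1` with
`t ≤ 2^u` pins down `t = 2^u - 1`.
-/

theorem Nat.eq_one_of_odd_of_lt_three {k : ℕ} (hk : Odd k) (h3 : k < 3) : k = 1 := by
  obtain ⟨j, rfl⟩ := hk
  omega

theorem Nat.add_one_eq_of_dvd_of_le {n t : ℕ} (hn : 2 ≤ n) (hdvd : n ∣ t + 1) (htn : t ≤ n) :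
    t + 1 = n :=
  Nat.eq_of_dvd_of_lt_two_mul (Nat.succ_ne_zero t) hdvd (by omega)

theorem typeII_classification_lt24_general
    (d m n r s t : ℕ)
    -- (I.1)
    (hI1 : Nat.gcd (n * (r - 1)) m = 1)
    -- (I.2)
    (hr1 : 1 ≤ r) (hrm : r ≤ m)
    -- (I.3) : d is the least positive integer with r^d ≡ 1 (mod m)
    (hI3 : IsLeast {e : ℕ | 0 < e ∧ r ^ e ≡ 1 [MOD m]} d)
    -- (II.1)
    (hs1 : 1 ≤ s) (hsm : s ≤ m)
    -- (II.3) and the first part of (II.4), with the same `u`: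
    -- `n = 2^u·n″` with `u ≥ 2`, `n″` odd, and `t ≡ −1 (mod 2^u)`
    (hII3 : ∃ u n'' : ℕ, 2 ≤ u ∧ Odd n'' ∧ n = 2 ^ u * n'' ∧ 2 ^ u ∣ (t + 1))
    -- (II.4), remaining parts
    (htn : t ≤ n)
    (h24 : 2 * m * n < 24) :
    (d, m, n, r, s, t) = (1, 1, 4, 1, 1, 3) ∨ (d, m, n, r, s, t) = (1, 1, 8, 1, 1, 7) := by
  obtain ⟨u, n'', hu, hn''_odd, rfl, hdvd⟩ := hII3
  have h4 : 4 ≤ 2 ^ u := by simpa using Nat.pow_le_pow_right two_pos hu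
  have h2 : 2 ∣ 2 ^ u * n'' * (r - 1) := ((dvd_pow_self 2 (by omega)).mul_right _).mul_right _
  have hm_odd : Odd m := (Nat.Coprime.coprime_dvd_left h2 hI1).odd_of_left
  obtain rfl : m = 1 := Nat.eq_one_of_odd_of_lt_three hm_odd (by nlinarith [hn''_odd.pos])
  obtain rfl : n'' = 1 := Nat.eq_one_of_odd_of_lt_three hn''_odd (by nlinarith)
  rw [mul_one] at htn h24
  have hu3 : u < 4 := (Nat.pow_lt_pow_iff_right (by norm_num)).1 (by omega : 2 ^ u < 2 ^ 4)
  have ht : t + 1 = 2 ^ u := Nat.add_one_eq_of_dvd_of_le (by omega) hdvd htn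
  obtain rfl : d = 1 := le_antisymm (hI3.2 ⟨one_pos, Nat.modEq_one⟩) hI3.1.1
  obtain rfl : r = 1 := by omega
  obtain rfl : s = 1 := by omega
  interval_cases u <;> simp <;> omega

/-- The only non-cyclic fixed point free groups of Type II of order less than 24:
Wolf's arithmetic conditions (I.1)–(I.4) and (II.1)–(II.4) with `2·m·n < 24` force
`(d, m, n, r, s, t) = (1, 1, 4, 1, 1, 3)` or `(d, m, n, r, s, t) = (1, 1, 8, 1, 1, 7)`. -/
theorem typeII_classification_lt24
    (d m n r s t : ℕ)
    (hd : 0 < d) (hm : 0 < m) (hn : 0 < n) (hr : 0 < r) (hs : 0 < s) (ht : 0 < t)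
    -- (I.1)
    (hI1 : Nat.gcd (n * (r - 1)) m = 1)
    -- (I.2)
    (hI2 : r ^ n ≡ 1 [MOD m]) (hr1 : 1 ≤ r) (hrm : r ≤ m)
    -- (I.3) : d is the least positive integer with r^d ≡ 1 (mod m)
    (hI3 : IsLeast {e : ℕ | 0 < e ∧ r ^ e ≡ 1 [MOD m]} d)
    -- (I.4)
    (hI4 : d ∣ n) (hI4' : ∀ p : ℕ, p.Prime → p ∣ d → p ∣ n / d)
    -- (II.1)
    (hII1 : s ^ 2 ≡ 1 [MOD m]) (hs1 : 1 ≤ s) (hsm : s ≤ m)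
    -- (II.2)
    (hII2 : r ^ (t - 1) ≡ 1 [MOD m])
    -- (II.3) and the first part of (II.4), with the same `u`:
    -- `n = 2^u·n″` with `u ≥ 2`, `n″` odd, and `t ≡ −1 (mod 2^u)`
    (hII3 : ∃ u n'' : ℕ, 2 ≤ u ∧ Odd n'' ∧ n = 2 ^ u * n'' ∧ 2 ^ u ∣ (t + 1))
    -- (II.4), remaining parts
    (hII4 : t ^ 2 ≡ 1 [MOD n]) (ht1 : 1 ≤ t) (htn : t ≤ n)
    (h24 : 2 * m * n < 24) :
    (d, m, n, r, s, t) = (1, 1, 4, 1, 1, 3) ∨ (d, m, n, r, s, t) = (1, 1, 8, 1, 1, 7) :=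
  typeII_classification_lt24_general d m n r s t hI1 hr1 hrm hI3 hs1 hsm hII3 htn h24
end

section
/- Let n ≥ 2 and q ≥ 3 be integers and let s = (1, 1, …, 1, 2) ∈ ℤⁿ (all entries 1 except the last entry, which is 2). For k ∈ ℕ let N(k) denote the (finite) number of a = (a₁,…,aₙ) ∈ ℤⁿ with |a₁| + ⋯ + |aₙ| = k and q ∣ (a₁s₁ + ⋯ + aₙsₙ), and let m_k = Σ_{r=0}^{⌊k/2⌋} binom(r+n−2, n−2)·N(k−2r). Then {k ∈ ℕ : m_k > 0} = {k ∈ ℕ : k is even} ∪ {k ∈ ℕ : k is odd and k ≥ 3}. -/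
/-!
Every even `k` is reached through the zero vector (`r = k / 2`, `N 0 = 1`), and every odd
`k ≥ 3` through the vector `2 e₁ - eₙ` of one-norm `3` (`r = (k - 3) / 2`), which lies in the
lattice because `2 s₁ - sₙ = 0`. For `k = 1` the only summand is `N 1`, and it vanishes because
the vectors of one-norm `1` are `±eᵢ` and `q` divides no `sᵢ ∈ {1, 2}`.
-/

open Finset

/-- The paper's `N(k)` is the `ncard` of this set. -/
def congrLatticeSphere {ι : Type*} [Fintype ι] (q : ℤ) (s : ι → ℤ) (k : ℕ) : Set (ι → ℤ) :=
  {a | ∑ i, (a i).natAbs = k ∧ q ∣ ∑ i, a i * s i}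

section CongrLatticeSphere

variable {ι : Type*} [Fintype ι]

theorem finite_setOf_sum_natAbs_eq (k : ℕ) : {a : ι → ℤ | ∑ i, (a i).natAbs = k}.Finite := by
  refine (Set.Finite.pi fun _ => Set.finite_Icc (-(k : ℤ)) k).subset ?_
  intro a ha i _
  have : (a i).natAbs ≤ k :=
    ha ▸ single_le_sum (fun j _ => Nat.zero_le (a j).natAbs) (mem_univ i)
  simp only [Set.mem_Icc]
  omega

theorem finite_congrLatticeSphere (q : ℤ) (s : ι → ℤ) (k : ℕ) :
    (congrLatticeSphere q s k).Finite :=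
  (finite_setOf_sum_natAbs_eq k).subset fun _ ha => ha.1

theorem zero_mem_congrLatticeSphere_zero (q : ℤ) (s : ι → ℤ) :
    (0 : ι → ℤ) ∈ congrLatticeSphere q s 0 := by
  simp [congrLatticeSphere]

theorem exists_natAbs_eq_one_of_sum_natAbs_eq_one {a : ι → ℤ}
    (ha : ∑ i, (a i).natAbs = 1) : ∃ i, (a i).natAbs = 1 ∧ ∀ j ≠ i, a j = 0 := by
  classical
  obtain ⟨i, -, hi⟩ := exists_ne_zero_of_sum_ne_zero (ha ▸ one_ne_zero)
  have hsplit := add_sum_erase univ (fun j => (a j).natAbs) (mem_univ i)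
  have hrest : ∑ j ∈ univ.erase i, (a j).natAbs = 0 := by omega
  refine ⟨i, by omega, fun j hj => ?_⟩
  exact Int.natAbs_eq_zero.mp <| sum_eq_zero_iff.mp hrest j (mem_erase.mpr ⟨hj, mem_univ j⟩)

theorem congrLatticeSphere_one_eq_empty {q : ℤ} {s : ι → ℤ} (hs : ∀ i, ¬ q ∣ s i) :
    congrLatticeSphere q s 1 = ∅ := by
  refine Set.eq_empty_of_forall_notMem fun a ⟨hnorm, hdvd⟩ => ?_
  obtain ⟨i, hi, hzero⟩ := exists_natAbs_eq_one_of_sum_natAbs_eq_one hnorm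
  rw [Fintype.sum_eq_single i fun j hj => by rw [hzero j hj, zero_mul]] at hdvd
  rcases Int.natAbs_eq_natAbs_iff.mp (hi.trans Int.natAbs_one.symm) with h | h <;>
    simp_all

theorem single_two_sub_single_one_mem_congrLatticeSphere_three [DecidableEq ι]
    (q : ℤ) {s : ι → ℤ} {i j : ι} (hij : i ≠ j) (hi : s i = 1) (hj : s j = 2) :
    Pi.single i 2 - Pi.single j 1 ∈ congrLatticeSphere q s 3 := by
  have hsupp : ∀ x, x ≠ i ∧ x ≠ j → (Pi.single i 2 - Pi.single j 1 : ι → ℤ) x = 0 := by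
    rintro x ⟨hxi, hxj⟩
    simp [hxi, hxj]
  refine ⟨?_, ?_⟩
  · rw [Fintype.sum_eq_add i j hij fun x hx => by rw [hsupp x hx, Int.natAbs_zero]]
    simp [hij, hij.symm]
  · rw [Fintype.sum_eq_add i j hij fun x hx => by rw [hsupp x hx, zero_mul]]
    simp [hij, hij.symm, hi, hj]

end CongrLatticeSphere

theorem sum_range_choose_mul_pos_iff (n k : ℕ) (N : ℕ → ℕ) :
    0 < ∑ r ∈ range (k / 2 + 1), (r + n - 2).choose (n - 2) * N (k - 2 * r) ↔
      ∃ r ≤ k / 2, 0 < N (k - 2 * r) := by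
  simp only [sum_pos_iff, mem_range, Nat.lt_succ_iff]
  exact exists_congr fun r => and_congr_right fun _ =>
    Nat.mul_pos_iff_of_pos_left (Nat.choose_pos (by omega))

theorem exists_pos_sub_two_mul_iff {N : ℕ → ℕ} (h0 : 0 < N 0) (h1 : N 1 = 0) (h3 : 0 < N 3)
    (k : ℕ) : (∃ r ≤ k / 2, 0 < N (k - 2 * r)) ↔ Even k ∨ Odd k ∧ 3 ≤ k := by
  constructor
  · rintro ⟨r, hr, hpos⟩
    rcases Nat.even_or_odd k with heven | hodd
    · exact Or.inl heven
    · refine Or.inr ⟨hodd, ?_⟩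
      by_contra! hk
      obtain rfl : k = 1 := by obtain ⟨c, rfl⟩ := hodd; omega
      obtain rfl : r = 0 := by omega
      exact hpos.ne' h1
  · rintro (⟨c, rfl⟩ | ⟨⟨c, rfl⟩, hk⟩)
    · exact ⟨c, by omega, by rwa [show c + c - 2 * c = 0 by omega]⟩
    · exact ⟨c - 1, by omega, by rwa [show 2 * c + 1 - 2 * (c - 1) = 3 by omega]⟩

/-- For the lens space `L(q; 1, …, 1, 2)` (any `q ≥ 3`, `n ≥ 2`), the set of indices `k`
with positive eigenvalue multiplicity `m k` is exactly the even numbers together with the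
odd numbers `≥ 3`; in particular it does not depend on `q`. -/
theorem lens_one_one_two_eigenvalue_spectrum
    (n q : ℕ) (hn : 2 ≤ n) (hq : 3 ≤ q)
    (s : Fin n → ℤ) (hs : ∀ i : Fin n, s i = if (i : ℕ) = n - 1 then 2 else 1)
    (N : ℕ → ℕ)
    (hN : ∀ k, N k = Set.ncard
      {a : Fin n → ℤ | (∑ i, (a i).natAbs) = k ∧ (q : ℤ) ∣ ∑ i, a i * s i})
    (m : ℕ → ℕ)
    (hm : ∀ k, m k = ∑ r ∈ Finset.range (k / 2 + 1),
      Nat.choose (r + n - 2) (n - 2) * N (k - 2 * r)) :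
    {k : ℕ | 0 < m k} = {k : ℕ | Even k} ∪ {k : ℕ | Odd k ∧ 3 ≤ k} := by
  replace hN : ∀ k, N k = (congrLatticeSphere (q : ℤ) s k).ncard := hN
  have hs_ndvd : ∀ i, ¬ (q : ℤ) ∣ s i := fun i hdvd => by
    rw [hs i] at hdvd
    split_ifs at hdvd <;> have := Int.le_of_dvd (by norm_num) hdvd <;> omega
  have hN0 : 0 < N 0 := hN 0 ▸ (Set.ncard_pos (finite_congrLatticeSphere _ _ _)).mpr
    ⟨0, zero_mem_congrLatticeSphere_zero _ _⟩
  have hN1 : N 1 = 0 := by rw [hN 1, congrLatticeSphere_one_eq_empty hs_ndvd, Set.ncard_empty]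
  have hN3 : 0 < N 3 := hN 3 ▸ (Set.ncard_pos (finite_congrLatticeSphere _ _ _)).mpr
    ⟨_, single_two_sub_single_one_mem_congrLatticeSphere_three (q : ℤ)
      (i := ⟨0, by omega⟩) (j := ⟨n - 1, by omega⟩) (by simp [Fin.ext_iff]; omega)
      (by simp [hs]; omega) (by simp [hs])⟩
  ext k
  rw [Set.mem_ofPred_eq, hm k, sum_range_choose_mul_pos_iff,
    exists_pos_sub_two_mul_iff hN0 hN1 hN3]
  rfl
end

section
/- Let n ≥ 3 and r > 2 be coprime positive integers and let a = (a₁,…,aₙ) ∈ ℤⁿ. Suppose that a is not self-reversing mod r (i.e. the multiset of residues mod r of (a₁,…,aₙ) differs from the multiset of residues mod r of (−a₁,…,−aₙ)) and that r divides a₁ + ⋯ + aₙ. Then a is irreversible mod r, i.e. there is no c ∈ ℤ such that the multiset of residues mod r of (a₁+c,…,aₙ+c) equals the multiset of residues mod r of (−a₁,…,−aₙ). -/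
/-- The multiset of residues mod `r` of the entries of the tuple `a`. -/
def residues (r : ℕ) {n : ℕ} (a : Fin n → ℤ) : Multiset (ZMod r) :=
  (Finset.univ.val : Multiset (Fin n)).map fun i => ((a i : ZMod r))

/-!
Summing the residues of `a + c` and of `-a` gives `∑ aᵢ + n c ≡ -∑ aᵢ (mod r)`. When `r ∣ ∑ aᵢ`
this says `n c ≡ 0`, and as `n` is invertible mod `r`, `c ≡ 0`; but then the residues of `a + c`
are those of `a`, so `a` would be self-reversing.
-/

section Residues

variable {r n : ℕ}

theorem sum_residues (a : Fin n → ℤ) : (residues r a).sum = ((∑ i, a i : ℤ) : ZMod r) := by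
  rw [residues, Int.cast_sum]
  rfl

theorem sum_residues_add_const (a : Fin n → ℤ) (c : ℤ) :
    (residues r fun i => a i + c).sum = (residues r a).sum + n * c := by
  simp only [sum_residues, Finset.sum_add_distrib, Finset.sum_const, Finset.card_univ,
    Fintype.card_fin, nsmul_eq_mul, Int.cast_add, Int.cast_mul, Int.cast_natCast]

theorem residues_add_const_of_intCast_eq_zero (a : Fin n → ℤ) {c : ℤ} (hc : (c : ZMod r) = 0) :
    (residues r fun i => a i + c) = residues r a := by
  simp only [residues, Int.cast_add, hc, add_zero]

theorem intCast_eq_zero_of_residues_add_const_eq_residues_neg (hco : n.Coprime r)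
    (a : Fin n → ℤ) (hsum : (r : ℤ) ∣ ∑ i, a i) {c : ℤ}
    (hc : (residues r fun i => a i + c) = residues r fun i => -a i) :
    (c : ZMod r) = 0 := by
  have hsum0 : ((∑ i, a i : ℤ) : ZMod r) = 0 := (ZMod.intCast_zmod_eq_zero_iff_dvd _ r).2 hsum
  have hnc : (n : ZMod r) * c = 0 := by
    have hsums := congrArg Multiset.sum hc
    rw [sum_residues_add_const, sum_residues, sum_residues, Finset.sum_neg_distrib,
      Int.cast_neg, hsum0, zero_add, neg_zero] at hsums
    exact hsums
  exact ((ZMod.isUnit_iff_coprime n r).2 hco).mul_right_eq_zero.1 hnc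

end Residues

theorem irreversible_of_not_selfReversing_of_sum_dvd_general
    (n r : ℕ) (hco : Nat.Coprime n r)
    (a : Fin n → ℤ)
    (hself : residues r a ≠ residues r (fun i => -a i))
    (hsum : (r : ℤ) ∣ ∑ i, a i) :
    ¬ ∃ c : ℤ, residues r (fun i => a i + c) = residues r (fun i => -a i) := by
  rintro ⟨c, hc⟩
  have hc0 := intCast_eq_zero_of_residues_add_const_eq_residues_neg hco a hsum hc
  rw [residues_add_const_of_intCast_eq_zero a hc0] at hc
  exact hself hc

/-- If `a ∈ ℤⁿ` (with `n ≥ 3` coprime to `r > 2`) is not self-reversing mod `r` and the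
sum of its entries is divisible by `r`, then `a` is irreversible mod `r`. -/
theorem irreversible_of_not_selfReversing_of_sum_dvd
    (n r : ℕ) (hn : 3 ≤ n) (hr : 2 < r) (hco : Nat.Coprime n r)
    (a : Fin n → ℤ)
    (hself : residues r a ≠ residues r (fun i => -a i))
    (hsum : (r : ℤ) ∣ ∑ i, a i) :
    ¬ ∃ c : ℤ, residues r (fun i => a i + c) = residues r (fun i => -a i) :=
  irreversible_of_not_selfReversing_of_sum_dvd_general n r hco a hself hsum
end

section
/- Let q ≥ 3 and n ≥ 1 be integers, ζ = exp(2πi/q) ∈ ℂ, q₀ = φ(q)/2 where φ is Euler's totient function, and let t₁,…,t_{q₀} be integers such that every integer coprime to q is congruent mod q to exactly one element of {t₁,…,t_{q₀}, −t₁,…,−t_{q₀}}. Let r ≥ 1 be an integer and let s = (s₁,…,sₙ), s′ = (s′₁,…,s′ₙ) ∈ ℤⁿ with gcd(q, sᵢ) = gcd(q, s′ᵢ) = 1 for all i. For an integer m ≥ 1 and u ∈ ℤᵐ define, for z ∈ ℂ with z^q ≠ 1, F_u(z) = ((1−z²)/q)·Σ_{h=0}^{q−1} ∏_{i=1}^{m}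 ((z − ζ^{h·uᵢ})·(z − ζ^{−h·uᵢ}))⁻¹. If F_s(z) = F_{s′}(z) for every z ∈ ℂ with z^q ≠ 1, then F_{s⁀r·t}(z) = F_{s′⁀r·t}(z) for every z ∈ ℂ with z^q ≠ 1, where s⁀r·t ∈ ℤ^{n+r·q₀} denotes s followed by r consecutive copies of (t₁,…,t_{q₀}). -/
open scoped Real

/-- Ikeda's generating function `F_u(z)` of the lens space with parameters `u` mod `q`:
`F_u(z) = ((1−z²)/q)·Σ_{h=0}^{q−1} ∏ᵢ ((z − ζ^{h·uᵢ})(z − ζ^{−h·uᵢ}))⁻¹`,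
where `ζ = exp(2πi/q)`.  The parameter tuple is indexed by an arbitrary finite type. -/
noncomputable def ikedaF (q : ℕ) {ι : Type*} [Fintype ι] (u : ι → ℤ) (z : ℂ) : ℂ :=
  ((1 - z ^ 2) / q) * ∑ h ∈ Finset.range q,
    (∏ i, ((z - Complex.exp (2 * π * Complex.I / q) ^ ((h : ℤ) * u i)) *
      (z - Complex.exp (2 * π * Complex.I / q) ^ (-((h : ℤ) * u i)))))⁻¹

/-!
Write `F_u(z) = ((1 - z²)/q) · Σ_h 1 / D_{u,h}(z)`. When `u` is prime to `q`, every root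
`ζ^{± h uᵢ}` of `D_{u,h}` lies in the orbit `{ζ^{hx} : x ∈ (ℤ/q)ˣ}`, so `D_{u,h}` divides
`B_h^{2n}` with `B_h = ∏ₓ (X - ζ^{hx})`, and two such orbit polynomials are either equal or
coprime. Grouping the terms by `B_h` therefore writes `F_u` as a sum of proper partial
fractions with pairwise coprime denominators, and `F_s = F_{s'}` forces equality class by class.
Since `t` represents the units up to sign, appending `r` copies of `t` multiplies `D_{u,h}` by
`B_h^r`, which is constant on each class.
-/

open Polynomial Filter

namespace Polynomial

theorem eventually_cofinite_eval_ne_zero {R : Type*} [CommRing R] [IsDomain R] {p : R[X]}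
    (hp : p ≠ 0) : ∀ᶠ z in cofinite, p.eval z ≠ 0 :=
  eventually_cofinite.mpr <| by simpa using finite_setOfPred_isRoot hp

theorem inv_eval_eq_eval_div_div_eval {K : Type*} [Field K] {p d : K[X]} (hd : d ∣ p) {z : K}
    (hp : p.eval z ≠ 0) : (d.eval z)⁻¹ = (p / d).eval z / p.eval z := by
  obtain ⟨e, rfl⟩ := hd
  have hd0 : d ≠ 0 := by rintro rfl; simp at hp
  rw [eval_mul] at hp ⊢
  rw [mul_div_cancel_left₀ e hd0]
  field_simp [left_ne_zero_of_mul hp, right_ne_zero_of_mul hp]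

theorem eq_of_eventually_sum_eval_div_eq {K : Type*} [Field K] [Infinite K] {ι : Type*}
    [DecidableEq ι] {s : Finset ι} {g r₁ r₂ : ι → K[X]} (hg : ∀ i ∈ s, (g i).Monic)
    (hcop : (s : Set ι).Pairwise fun i j => IsCoprime (g i) (g j))
    (hr₁ : ∀ i ∈ s, (r₁ i).degree < (g i).degree) (hr₂ : ∀ i ∈ s, (r₂ i).degree < (g i).degree)
    (hf : ∀ᶠ z in cofinite,
      ∑ i ∈ s, (r₁ i).eval z / (g i).eval z = ∑ i ∈ s, (r₂ i).eval z / (g i).eval z) :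
    ∀ i ∈ s, r₁ i = r₂ i := by
  refine (quo_mul_prod_add_sum_rem_mul_prod_unique (q₁ := 0) (q₂ := 0) hg hcop hr₁ hr₂ ?_).2
  simp only [zero_mul, zero_add]
  have hclear : ∀ (r : ι → K[X]) (z : K), (∀ i ∈ s, (g i).eval z ≠ 0) →
      (∑ i ∈ s, r i * ∏ k ∈ s.erase i, g k).eval z
        = (∏ i ∈ s, (g i).eval z) * ∑ i ∈ s, (r i).eval z / (g i).eval z := by
    intro r z hz
    simp only [eval_finsetSum, eval_mul, eval_prod, Finset.mul_sum]
    refine Finset.sum_congr rfl fun i hi => ?_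
    rw [← Finset.mul_prod_erase s _ hi]
    field_simp [hz i hi]
  have hne : ∀ᶠ z in cofinite, ∀ i ∈ s, (g i).eval z ≠ 0 :=
    (eventually_all_finset s).mpr fun i hi => eventually_cofinite_eval_ne_zero (hg i hi).ne_zero
  refine eq_of_infinite_eval_eq _ _ (frequently_cofinite_iff_infinite.mp ?_)
  refine ((hf.and hne).mono fun z ⟨hfz, hz⟩ => ?_).frequently
  rw [hclear r₁ z hz, hclear r₂ z hz, hfz]

end Polynomial

theorem eventually_cofinite_pow_ne {R : Type*} [CommRing R] [IsDomain R] {n : ℕ} (hn : n ≠ 0)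
    (a : R) : ∀ᶠ z : R in cofinite, z ^ n ≠ a := by
  simpa [sub_eq_zero] using
    Polynomial.eventually_cofinite_eval_ne_zero (X_pow_sub_C_ne_zero (Nat.pos_of_ne_zero hn) a)

theorem IsPrimitiveRoot.zpow_eq_zpow_iff {K : Type*} [Field K] {q : ℕ} [NeZero q] {ζ : K}
    (hζ : IsPrimitiveRoot ζ q) {a b : ℤ} : ζ ^ a = ζ ^ b ↔ (a : ZMod q) = b := by
  have hζ0 : ζ ≠ 0 := hζ.ne_zero (NeZero.ne q)
  rw [ZMod.intCast_eq_intCast_iff_dvd_sub, ← hζ.zpow_eq_one_iff_dvd, zpow_sub₀ hζ0,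
    div_eq_one_iff_eq (zpow_ne_zero _ hζ0), eq_comm]

namespace LensSpace

variable {K : Type*} [Field K] {ι : Type*} [Fintype ι]

noncomputable def lensDenom (ζ : K) (u : ι → ℤ) (h : ℕ) : K[X] :=
  ∏ i, (X - C (ζ ^ ((h : ℤ) * u i))) * (X - C (ζ ^ (-((h : ℤ) * u i))))

theorem lensDenom_monic (ζ : K) (u : ι → ℤ) (h : ℕ) : (lensDenom ζ u h).Monic :=
  monic_prod_of_monic _ _ fun _ _ => (monic_X_sub_C _).mul (monic_X_sub_C _)

theorem natDegree_lensDenom (ζ : K) (u : ι → ℤ) (h : ℕ) :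
    (lensDenom ζ u h).natDegree = 2 * Fintype.card ι := by
  rw [lensDenom, natDegree_prod_of_monic _ _ fun _ _ => (monic_X_sub_C _).mul (monic_X_sub_C _)]
  simp [natDegree_mul (X_sub_C_ne_zero _) (X_sub_C_ne_zero _), mul_comm]

theorem lensDenom_sumElim {κ : Type*} [Fintype κ] (ζ : K) (u : ι → ℤ) (v : κ → ℤ) (h : ℕ) :
    lensDenom ζ (Sum.elim u v) h = lensDenom ζ u h * lensDenom ζ v h :=
  Fintype.prod_sum_type _

theorem lensDenom_comp_snd {α κ : Type*} [Fintype α] [Fintype κ] (ζ : K) (v : κ → ℤ) (h : ℕ) :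
    lensDenom ζ (fun p : α × κ => v p.2) h = lensDenom ζ v h ^ Fintype.card α := by
  simp only [lensDenom, Fintype.prod_prod_type]
  rw [Finset.prod_const, Finset.card_univ]

variable {q : ℕ} {ζ : K}

theorem eval_X_sub_C_zpow_ne_zero (hζ : IsPrimitiveRoot ζ q) {z : K} (hz : z ^ q ≠ 1) (a : ℤ) :
    (X - C (ζ ^ a)).eval z ≠ 0 := by
  rw [eval_sub, eval_X, eval_C, sub_ne_zero]
  rintro rfl
  exact hz (by rw [← zpow_natCast, ← zpow_mul, mul_comm, zpow_mul, zpow_natCast, hζ.pow_eq_one,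
    one_zpow])

variable [NeZero q]

noncomputable def unitOrbitPoly (q : ℕ) [NeZero q] (ζ : K) (h : ℕ) : K[X] :=
  ∏ x : (ZMod q)ˣ, (X - C (ζ ^ ((h : ℤ) * ((x : ZMod q).val : ℤ))))

theorem unitOrbitPoly_monic (ζ : K) (h : ℕ) : (unitOrbitPoly q ζ h).Monic :=
  monic_prod_of_monic _ _ fun _ _ => monic_X_sub_C _

theorem eval_unitOrbitPoly_ne_zero (hζ : IsPrimitiveRoot ζ q) {z : K} (hz : z ^ q ≠ 1) (h : ℕ) :
    (unitOrbitPoly q ζ h).eval z ≠ 0 := by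
  rw [unitOrbitPoly, eval_prod, Finset.prod_ne_zero_iff]
  exact fun x _ => eval_X_sub_C_zpow_ne_zero hζ hz _

theorem unitOrbitPoly_eq_of_natCast_eq_mul (hζ : IsPrimitiveRoot ζ q) {h k : ℕ} (c : (ZMod q)ˣ)
    (hc : (k : ZMod q) = h * c) : unitOrbitPoly q ζ k = unitOrbitPoly q ζ h := by
  refine Fintype.prod_equiv (Equiv.mulLeft c) _ _ fun x => ?_
  rw [hζ.zpow_eq_zpow_iff.mpr]
  push_cast [ZMod.natCast_zmod_val, hc, Equiv.coe_mulLeft, Units.val_mul]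
  ring

theorem X_sub_C_dvd_unitOrbitPoly (hζ : IsPrimitiveRoot ζ q) {u : ℤ} (hu : IsUnit (u : ZMod q))
    (h : ℕ) : X - C (ζ ^ ((h : ℤ) * u)) ∣ unitOrbitPoly q ζ h := by
  have hroot : ζ ^ ((h : ℤ) * u) = ζ ^ ((h : ℤ) * ((hu.unit : ZMod q).val : ℤ)) := by
    rw [hζ.zpow_eq_zpow_iff]
    push_cast [ZMod.natCast_zmod_val, IsUnit.unit_spec]
    rfl
  rw [hroot]
  exact Finset.dvd_prod_of_mem (fun x : (ZMod q)ˣ => X - C (ζ ^ ((h : ℤ) * ((x : ZMod q).val : ℤ))))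
    (Finset.mem_univ _)

theorem lensDenom_dvd_unitOrbitPoly_pow (hζ : IsPrimitiveRoot ζ q) {u : ι → ℤ}
    (hu : ∀ i, IsUnit (u i : ZMod q)) (h : ℕ) :
    lensDenom ζ u h ∣ unitOrbitPoly q ζ h ^ (2 * Fintype.card ι) := by
  rw [pow_mul, ← Finset.card_univ, ← Finset.prod_const]
  refine Finset.prod_dvd_prod_of_dvd _ _ fun i _ => ?_
  rw [sq, ← mul_neg]
  exact mul_dvd_mul (X_sub_C_dvd_unitOrbitPoly hζ (hu i) h)
    (X_sub_C_dvd_unitOrbitPoly hζ (by push_cast; exact (hu i).neg) h)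

theorem isCoprime_unitOrbitPoly (hζ : IsPrimitiveRoot ζ q) {h k : ℕ}
    (hne : unitOrbitPoly q ζ h ≠ unitOrbitPoly q ζ k) :
    IsCoprime (unitOrbitPoly q ζ h) (unitOrbitPoly q ζ k) := by
  refine IsCoprime.prod_left fun x _ => IsCoprime.prod_right fun y _ => ?_
  refine isCoprime_X_sub_C_of_isUnit_sub (sub_ne_zero.mpr fun hxy => hne ?_).isUnit
  -- a common root `ζ^{hx} = ζ^{ky}` makes `k` a unit multiple of `h` mod `q`
  refine (unitOrbitPoly_eq_of_natCast_eq_mul hζ (x * y⁻¹) ?_).symm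
  rw [hζ.zpow_eq_zpow_iff] at hxy
  push_cast [ZMod.natCast_zmod_val] at hxy
  rw [Units.val_mul, ← mul_assoc, hxy, mul_assoc, Units.mul_inv, mul_one]

theorem lensDenom_eq_unitOrbitPoly_of_reps (hζ : IsPrimitiveRoot ζ q) {κ : Type*} [Fintype κ]
    (t : κ → ℤ) (hcard : Fintype.card (ZMod q)ˣ = Fintype.card (κ × Bool))
    (ht : ∀ m : ℤ, Int.gcd m q = 1 → ∃ p : κ × Bool,
      (m : ZMod q) = if p.2 then ((t p.1 : ℤ) : ZMod q) else -((t p.1 : ℤ) : ZMod q))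
    (h : ℕ) : lensDenom ζ t h = unitOrbitPoly q ζ h := by
  have hreps : ∀ x : (ZMod q)ˣ, ∃ p : κ × Bool,
      (x : ZMod q) = if p.2 then ((t p.1 : ℤ) : ZMod q) else -((t p.1 : ℤ) : ZMod q) := by
    intro x
    obtain ⟨p, hp⟩ := ht ((x : ZMod q).val : ℤ)
      (by rw [Int.gcd_natCast_natCast]; exact ZMod.val_coe_unit_coprime x)
    exact ⟨p, by rwa [Int.cast_natCast, ZMod.natCast_zmod_val] at hp⟩
  choose e he using hreps
  have he_inj : Function.Injective e := fun x y hxy => Units.ext (by rw [he x, he y, hxy])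
  have he_bij : Function.Bijective e :=
    (Fintype.bijective_iff_injective_and_card e).mpr ⟨he_inj, hcard⟩
  symm
  refine (Fintype.prod_bijective e he_bij _
    (fun p => X - C (ζ ^ ((h : ℤ) * if p.2 then t p.1 else -t p.1))) fun x => ?_).trans ?_
  · rw [hζ.zpow_eq_zpow_iff.mpr]
    push_cast [ZMod.natCast_zmod_val]
    rw [he x]
  · simp [lensDenom, Fintype.prod_prod_type, mul_neg]

theorem degree_div_lensDenom_lt [Nonempty ι] (u : ι → ℤ) (h : ℕ) :
    (unitOrbitPoly q ζ h ^ (2 * Fintype.card ι) / lensDenom ζ u h).degree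
      < (unitOrbitPoly q ζ h ^ (2 * Fintype.card ι)).natDegree := by
  have hpos : 0 < (lensDenom ζ u h).degree := by
    rw [degree_eq_natDegree (lensDenom_monic ζ u h).ne_zero, natDegree_lensDenom]
    exact_mod_cast Nat.mul_pos two_pos Fintype.card_pos
  have hmonic := (unitOrbitPoly_monic (q := q) ζ h).pow (2 * Fintype.card ι)
  rw [← degree_eq_natDegree hmonic.ne_zero]
  exact degree_div_lt hmonic.ne_zero hpos

open Classical in
theorem sum_inv_eval_lensDenom_fiber_eq [Infinite K] [Nonempty ι] (hζ : IsPrimitiveRoot ζ q)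
    {u u' : ι → ℤ} (hu : ∀ i, IsUnit (u i : ZMod q)) (hu' : ∀ i, IsUnit (u' i : ZMod q))
    {S : Finset ℕ} (hS : ∀ᶠ z in cofinite, ∑ h ∈ S, ((lensDenom ζ u h).eval z)⁻¹
      = ∑ h ∈ S, ((lensDenom ζ u' h).eval z)⁻¹)
    {b : K[X]} (hb : b ∈ S.image (unitOrbitPoly q ζ)) {z : K} (hz : z ^ q ≠ 1) :
    ∑ h ∈ S with unitOrbitPoly q ζ h = b, ((lensDenom ζ u h).eval z)⁻¹
      = ∑ h ∈ S with unitOrbitPoly q ζ h = b, ((lensDenom ζ u' h).eval z)⁻¹ := by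
  set m := 2 * Fintype.card ι
  let num (v : ι → ℤ) (b : K[X]) : K[X] :=
    ∑ h ∈ S with unitOrbitPoly q ζ h = b, b ^ m / lensDenom ζ v h
  have hfiber : ∀ v : ι → ℤ, (∀ i, IsUnit (v i : ZMod q)) → ∀ b z, z ^ q ≠ 1 →
      ∑ h ∈ S with unitOrbitPoly q ζ h = b, ((lensDenom ζ v h).eval z)⁻¹
        = (num v b).eval z / (b ^ m).eval z := by
    intro v hv b z hz
    rw [eval_finsetSum, Finset.sum_div]
    refine Finset.sum_congr rfl fun h hh => ?_
    obtain rfl := (Finset.mem_filter.mp hh).2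
    exact inv_eval_eq_eval_div_div_eval (lensDenom_dvd_unitOrbitPoly_pow hζ hv h)
      (by rw [eval_pow]; exact pow_ne_zero _ (eval_unitOrbitPoly_ne_zero hζ hz h))
  have hdeg : ∀ (v : ι → ℤ), ∀ b ∈ S.image (unitOrbitPoly q ζ),
      (num v b).degree < (b ^ m).degree := by
    intro v b hb
    obtain ⟨h₀, -, rfl⟩ := Finset.mem_image.mp hb
    rw [degree_eq_natDegree ((unitOrbitPoly_monic ζ h₀).pow m).ne_zero, ← mem_degreeLT]
    refine Submodule.sum_mem _ fun h hh => ?_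
    rw [← (Finset.mem_filter.mp hh).2, mem_degreeLT]
    exact degree_div_lensDenom_lt v h
  have hnum : ∀ b ∈ S.image (unitOrbitPoly q ζ), num u b = num u' b := by
    refine eq_of_eventually_sum_eval_div_eq (g := fun b => b ^ m) ?_ ?_ (hdeg u) (hdeg u') ?_
    · intro b hb
      obtain ⟨h, -, rfl⟩ := Finset.mem_image.mp hb
      exact (unitOrbitPoly_monic ζ h).pow m
    · intro b hb b' hb' hne
      obtain ⟨h, -, rfl⟩ := Finset.mem_image.mp hb
      obtain ⟨h', -, rfl⟩ := Finset.mem_image.mp hb'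
      exact (isCoprime_unitOrbitPoly hζ hne).pow
    · refine (hS.and (eventually_cofinite_pow_ne (NeZero.ne q) 1)).mono fun z ⟨hSz, hz⟩ => ?_
      have hmaps : ∀ h ∈ S, unitOrbitPoly q ζ h ∈ S.image (unitOrbitPoly q ζ) :=
        fun h hh => Finset.mem_image_of_mem _ hh
      simp only [← hfiber u hu _ z hz, ← hfiber u' hu' _ z hz,
        Finset.sum_fiberwise_of_maps_to hmaps]
      exact hSz
  rw [hfiber u hu b z hz, hfiber u' hu' b z hz, hnum b hb]

theorem sum_inv_eval_lensDenom_mul_eq [Infinite K] [Nonempty ι] (hζ : IsPrimitiveRoot ζ q)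
    {u u' : ι → ℤ} (hu : ∀ i, IsUnit (u i : ZMod q)) (hu' : ∀ i, IsUnit (u' i : ZMod q))
    {S : Finset ℕ} (hS : ∀ᶠ z in cofinite, ∑ h ∈ S, ((lensDenom ζ u h).eval z)⁻¹
      = ∑ h ∈ S, ((lensDenom ζ u' h).eval z)⁻¹)
    (w : K[X] → K) {z : K} (hz : z ^ q ≠ 1) :
    ∑ h ∈ S, ((lensDenom ζ u h).eval z)⁻¹ * w (unitOrbitPoly q ζ h)
      = ∑ h ∈ S, ((lensDenom ζ u' h).eval z)⁻¹ * w (unitOrbitPoly q ζ h) := by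
  classical
  have hmaps : ∀ h ∈ S, unitOrbitPoly q ζ h ∈ S.image (unitOrbitPoly q ζ) :=
    fun h hh => Finset.mem_image_of_mem _ hh
  rw [← Finset.sum_fiberwise_of_maps_to hmaps, ← Finset.sum_fiberwise_of_maps_to hmaps]
  refine Finset.sum_congr rfl fun b hb => ?_
  have hfactor : ∀ v : ι → ℤ, ∑ h ∈ S with unitOrbitPoly q ζ h = b,
      ((lensDenom ζ v h).eval z)⁻¹ * w (unitOrbitPoly q ζ h)
        = (∑ h ∈ S with unitOrbitPoly q ζ h = b, ((lensDenom ζ v h).eval z)⁻¹) * w b := by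
    intro v
    rw [Finset.sum_mul]
    exact Finset.sum_congr rfl fun h hh => by rw [(Finset.mem_filter.mp hh).2]
  rw [hfactor, hfactor, sum_inv_eval_lensDenom_fiber_eq hζ hu hu' hS hb hz]

end LensSpace

open LensSpace

theorem card_units_zmod_eq_card_fin_prod_bool {q q₀ : ℕ} [NeZero q] (hq : 3 ≤ q)
    (hq₀ : q₀ = Nat.totient q / 2) : Fintype.card (ZMod q)ˣ = Fintype.card (Fin q₀ × Bool) := by
  obtain ⟨k, hk⟩ := Nat.totient_even (by omega : 2 < q)
  simp only [ZMod.card_units_eq_totient, Fintype.card_prod, Fintype.card_fin, Fintype.card_bool]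
  omega

theorem ikedaF_eq_sum_inv_eval_lensDenom (q : ℕ) {ι : Type*} [Fintype ι] (u : ι → ℤ) (z : ℂ) :
    ikedaF q u z = ((1 - z ^ 2) / q) * ∑ h ∈ Finset.range q,
      ((lensDenom (Complex.exp (2 * π * Complex.I / q)) u h).eval z)⁻¹ := by
  simp [ikedaF, lensDenom, eval_prod]

theorem ikedaF_append_reps_eq_general
    (q n q₀ r : ℕ) (hq : 3 ≤ q) (hn : 1 ≤ n)
    (hq₀ : q₀ = Nat.totient q / 2)
    (t : Fin q₀ → ℤ)
    (ht : ∀ m : ℤ, Int.gcd m q = 1 → ∃! p : Fin q₀ × Bool,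
      (m : ZMod q) = if p.2 then ((t p.1 : ℤ) : ZMod q) else -((t p.1 : ℤ) : ZMod q))
    (s s' : Fin n → ℤ)
    (hs : ∀ i, Int.gcd (q : ℤ) (s i) = 1) (hs' : ∀ i, Int.gcd (q : ℤ) (s' i) = 1)
    (hiso : ∀ z : ℂ, z ^ q ≠ 1 → ikedaF q s z = ikedaF q s' z) :
    ∀ z : ℂ, z ^ q ≠ 1 →
      ikedaF q (Sum.elim s fun p : Fin r × Fin q₀ => t p.2) z
        = ikedaF q (Sum.elim s' fun p : Fin r × Fin q₀ => t p.2) z := by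
  have hq0 : q ≠ 0 := by omega
  have : NeZero q := ⟨hq0⟩
  have : Nonempty (Fin n) := ⟨⟨0, hn⟩⟩
  obtain ⟨ζ, hζ_def⟩ : ∃ ζ, Complex.exp (2 * π * Complex.I / q) = ζ := ⟨_, rfl⟩
  have hζ : IsPrimitiveRoot ζ q := hζ_def ▸ Complex.isPrimitiveRoot_exp q hq0
  simp only [ikedaF_eq_sum_inv_eval_lensDenom, hζ_def] at hiso ⊢
  have hunit : ∀ {u : Fin n → ℤ}, (∀ i, Int.gcd q (u i) = 1) → ∀ i, IsUnit (u i : ZMod q) :=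
    fun hu i => (ZMod.coe_int_isUnit_iff_isCoprime _ _).mpr
      (Int.isCoprime_iff_gcd_eq_one.mpr (hu i))
  have hcard := card_units_zmod_eq_card_fin_prod_bool hq hq₀
  have happend : ∀ (u : Fin n → ℤ) (h : ℕ),
      lensDenom ζ (Sum.elim u fun p : Fin r × Fin q₀ => t p.2) h
        = lensDenom ζ u h * unitOrbitPoly q ζ h ^ r := fun u h => by
    rw [lensDenom_sumElim, lensDenom_comp_snd, Fintype.card_fin,
      lensDenom_eq_unitOrbitPoly_of_reps hζ t hcard (fun m hm => (ht m hm).exists)]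
  have hS : ∀ᶠ z in cofinite, ∑ h ∈ Finset.range q, ((lensDenom ζ s h).eval z)⁻¹
      = ∑ h ∈ Finset.range q, ((lensDenom ζ s' h).eval z)⁻¹ :=
    ((eventually_cofinite_pow_ne hq0 1).and (eventually_cofinite_pow_ne two_ne_zero 1)).mono
      fun z ⟨hzq, hz2⟩ => mul_left_cancel₀
        (div_ne_zero (sub_ne_zero.mpr (Ne.symm hz2)) (Nat.cast_ne_zero.mpr hq0)) (hiso z hzq)
  intro z hz
  simp only [happend, eval_mul, eval_pow, mul_inv]
  rw [sum_inv_eval_lensDenom_mul_eq hζ (hunit hs) (hunit hs') hS (fun b => (b.eval z ^ r)⁻¹) hz]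

/-- If the lens spaces `L(q;s)` and `L(q;s′)` are isospectral (equal Ikeda generating
functions away from `q`-th roots of unity), then so are the lens spaces obtained by
appending `r` copies of a representative set `t(q) = (t₁,…,t_{q₀})` of the units mod `q`
up to sign, where `q₀ = φ(q)/2`. -/
theorem ikedaF_append_reps_eq
    (q n q₀ r : ℕ) (hq : 3 ≤ q) (hn : 1 ≤ n) (hr : 1 ≤ r)
    (hq₀ : q₀ = Nat.totient q / 2)
    (t : Fin q₀ → ℤ)
    (ht : ∀ m : ℤ, Int.gcd m q = 1 → ∃! p : Fin q₀ × Bool,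
      (m : ZMod q) = if p.2 then ((t p.1 : ℤ) : ZMod q) else -((t p.1 : ℤ) : ZMod q))
    (s s' : Fin n → ℤ)
    (hs : ∀ i, Int.gcd (q : ℤ) (s i) = 1) (hs' : ∀ i, Int.gcd (q : ℤ) (s' i) = 1)
    (hiso : ∀ z : ℂ, z ^ q ≠ 1 → ikedaF q s z = ikedaF q s' z) :
    ∀ z : ℂ, z ^ q ≠ 1 →
      ikedaF q (Sum.elim s fun p : Fin r × Fin q₀ => t p.2) z
        = ikedaF q (Sum.elim s' fun p : Fin r × Fin q₀ => t p.2) z :=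
  ikedaF_append_reps_eq_general q n q₀ r hq hn hq₀ t ht s s' hs hs' hiso
end

section
/- Let q be a positive integer divisible by 4. For each positive divisor d of q define the lattice ℒ_d = {(a,b) ∈ ℤ² : (q/d) ∣ b} and, for k ∈ ℕ, let N_d(k) denote the (finite) number of (a,b) ∈ ℒ_d with |a| + |b| = k. Then: (i) N_1(k) = N_2(k) for every natural number k < q/2; and (ii) for any two positive divisors d < d′ of q one has N_d(q/d′) ≠ N_{d′}(q/d′); in particular the sequences (N_d(k))_{k∈ℕ} for distinct divisors d of q are pairwise distinct. -/
/-!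
Points of `ℤ²` of one-norm `k` whose second coordinate is divisible by `m` lie on the axis
`b = 0` as long as `k < m`: there are two of them, `(±k, 0)`, whatever `m` is. At `k = m` the
two points `(0, ±m)` join them. Since `d < d'` forces `q / d' < q / d`, the one-norm `q / d'`
separates `N d` (value 2) from `N d'` (value 4), while for `k < q / 2` the lattices for
`d = 1, 2` both contribute only the axis points.
-/

theorem Nat.div_lt_div_of_dvd_of_lt {q d d' : ℕ} (hq : 0 < q) (hd : d ∣ q) (hd' : d' ∣ q)
    (h : d < d') : q / d' < q / d := by
  by_contra! hle
  have hpos : 0 < q / d' := Nat.div_pos (Nat.le_of_dvd hq hd') (by omega)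
  have : q < q := calc
    q = q / d * d := (Nat.div_mul_cancel hd).symm
    _ ≤ q / d' * d := Nat.mul_le_mul_right d hle
    _ < q / d' * d' := Nat.mul_lt_mul_of_pos_left h hpos
    _ = q := Nat.div_mul_cancel hd'
  exact lt_irrefl q this

def latticeSphere (m k : ℕ) : Set (ℤ × ℤ) :=
  {p | (m : ℤ) ∣ p.2 ∧ p.1.natAbs + p.2.natAbs = k}

theorem mem_latticeSphere_of_lt {m k : ℕ} (hk : k < m) {p : ℤ × ℤ} :
    p ∈ latticeSphere m k ↔ p.2 = 0 ∧ p.1.natAbs = k := by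
  constructor
  · rintro ⟨hdvd, hsum⟩
    have hb : p.2 = 0 := Int.eq_zero_of_dvd_of_natAbs_lt_natAbs hdvd (by simp; omega)
    exact ⟨hb, by simpa [hb] using hsum⟩
  · rintro ⟨hb, ha⟩
    exact ⟨by simp [hb], by simp [hb, ha]⟩

theorem latticeSphere_congr_of_lt {m m' k : ℕ} (hm : k < m) (hm' : k < m') :
    latticeSphere m k = latticeSphere m' k := by
  ext p
  rw [mem_latticeSphere_of_lt hm, mem_latticeSphere_of_lt hm']

theorem latticeSphere_eq_pair_of_lt {m k : ℕ} (hk : k < m) :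
    latticeSphere m k = {((k : ℤ), 0), (-(k : ℤ), 0)} := by
  ext ⟨a, b⟩
  simp only [mem_latticeSphere_of_lt hk, Int.natAbs_eq_iff, Set.mem_insert_iff,
    Set.mem_singleton_iff, Prod.mk.injEq]
  tauto

theorem latticeSphere_self (m : ℕ) :
    latticeSphere m m = {((m : ℤ), 0), (-(m : ℤ), 0), (0, (m : ℤ)), (0, -(m : ℤ))} := by
  ext ⟨a, b⟩
  simp only [latticeSphere, Set.mem_ofPred_eq, Set.mem_insert_iff, Set.mem_singleton_iff,
    Prod.mk.injEq]
  constructor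
  · rintro ⟨hdvd, hsum⟩
    rcases eq_or_ne b 0 with rfl | hb
    · rcases Int.natAbs_eq_iff.1 (by simpa using hsum : a.natAbs = m) with rfl | rfl <;> simp
    · have hbm : m ≤ b.natAbs := by simpa using Int.natAbs_le_of_dvd_ne_zero hdvd hb
      have ha : a = 0 := by omega
      rcases Int.natAbs_eq_iff.1 (by omega : b.natAbs = m) with rfl | rfl <;> simp [ha]
  · rintro (⟨rfl, rfl⟩ | ⟨rfl, rfl⟩ | ⟨rfl, rfl⟩ | ⟨rfl, rfl⟩) <;> simp

theorem ncard_latticeSphere_of_lt {m k : ℕ} (hk0 : 0 < k) (hk : k < m) :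
    (latticeSphere m k).ncard = 2 := by
  rw [latticeSphere_eq_pair_of_lt hk, Set.ncard_pair]
  simp only [ne_eq, Prod.mk.injEq, and_true]
  omega

theorem ncard_latticeSphere_self {m : ℕ} (hm : 0 < m) : (latticeSphere m m).ncard = 4 := by
  rw [latticeSphere_self, Set.ncard_insert_of_notMem, Set.ncard_insert_of_notMem,
    Set.ncard_pair] <;> simp [Prod.ext_iff] <;> omega

theorem lens_orbifold_lattice_counts_general
    (q : ℕ) (hq : 0 < q)
    (N : ℕ → ℕ → ℕ)
    (hN : ∀ d k, N d k = Set.ncard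
      {p : ℤ × ℤ | ((q / d : ℕ) : ℤ) ∣ p.2 ∧ p.1.natAbs + p.2.natAbs = k}) :
    (∀ k : ℕ, k < q / 2 → N 1 k = N 2 k) ∧
    (∀ d d' : ℕ, 0 < d → d ∣ q → d' ∣ q → d < d' → N d (q / d') ≠ N d' (q / d')) ∧
    (∀ d d' : ℕ, 0 < d → 0 < d' → d ∣ q → d' ∣ q → d ≠ d' →
      (fun k => N d k) ≠ (fun k => N d' k)) := by
  have hN : ∀ d k, N d k = (latticeSphere (q / d) k).ncard := hN
  have separate : ∀ d d' : ℕ, 0 < d → d ∣ q → d' ∣ q → d < d' →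
      N d (q / d') ≠ N d' (q / d') := by
    intro d d' hd hdq hd'q hdd'
    have hk0 : 0 < q / d' := Nat.div_pos (Nat.le_of_dvd hq hd'q) (hd.trans hdd')
    rw [hN, hN, ncard_latticeSphere_of_lt hk0 (Nat.div_lt_div_of_dvd_of_lt hq hdq hd'q hdd'),
      ncard_latticeSphere_self hk0]
    decide
  refine ⟨fun k hk => ?_, separate, fun d d' hd hd' hdq hd'q hne hfun => ?_⟩
  · rw [hN, hN, latticeSphere_congr_of_lt (by omega) hk]
  · rcases hne.lt_or_gt with h | h
    · exact separate d d' hd hdq hd'q h (congrFun hfun (q / d'))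
    · exact separate d' d hd' hd'q hdq h (congrFun hfun (q / d)).symm

/-- For `q` divisible by 4 and a positive divisor `d` of `q`, let
`N d k` be the number of points `(a,b) ∈ ℤ²` with `(q/d) ∣ b` and `|a| + |b| = k`
(the one-norm-`k` points of the congruence lattice of the lens orbifold `L(q;0,d)`).
Then (i) `N 1 k = N 2 k` for all `k < q/2`, (ii) `N d (q/d′) ≠ N d′ (q/d′)` for
positive divisors `d < d′` of `q`, and in particular (iii) the sequences `N d` for
distinct positive divisors `d` of `q` are pairwise distinct. -/
theorem lens_orbifold_lattice_counts
    (q : ℕ) (hq : 0 < q) (h4 : 4 ∣ q)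
    (N : ℕ → ℕ → ℕ)
    (hN : ∀ d k, N d k = Set.ncard
      {p : ℤ × ℤ | ((q / d : ℕ) : ℤ) ∣ p.2 ∧ p.1.natAbs + p.2.natAbs = k}) :
    (∀ k : ℕ, k < q / 2 → N 1 k = N 2 k) ∧
    (∀ d d' : ℕ, 0 < d → d ∣ q → d' ∣ q → d < d' → N d (q / d') ≠ N d' (q / d')) ∧
    (∀ d d' : ℕ, 0 < d → 0 < d' → d ∣ q → d' ∣ q → d ≠ d' →
      (fun k => N d k) ≠ (fun k => N d' k)) :=
  lens_orbifold_lattice_counts_general q hq N hN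
end
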